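/- arXiv:1609.07364 — 5 statements merged into one kernel-verified Lean document; each statement's English description precedes it below -/
import Mathlib

section
/- Let 0 < δ < 1 and let w ∈ ℂ satisfy Re(w) ≥ 0. Then sin(π(1-δ)/2) · |w|^δ ≤ Re(w^δ), where w^δ denotes the principal branch power. -/
open Real

/-
Write `w^δ = ‖w‖^δ · e^{iδ arg w}`. On the closed right half-plane `|arg w| ≤ π/2`, so the
argument `δ arg w` of `w^δ` has modulus at most `π|δ|/2 ≤ π`, where cosine is decreasing
in the modulus; hence `Re(w^δ) ≥ ‖w‖^δ cos(πδ/2)`, and `cos(πδ/2) = sin(π(1-δ)/2)`.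
-/

namespace Complex

theorem cos_pi_mul_div_two_le_cos_arg_mul {w : ℂ} (hw : 0 ≤ w.re) {δ : ℝ}
    (hδ : |δ| ≤ 2) : Real.cos (π * δ / 2) ≤ Real.cos (arg w * δ) := by
  have harg : |arg w| ≤ π / 2 := abs_arg_le_pi_div_two_iff.mpr hw
  have hle : |arg w * δ| ≤ |π * δ / 2| := by
    rw [abs_mul, abs_div, abs_mul, abs_of_pos pi_pos, abs_two]
    nlinarith [abs_nonneg δ]
  rw [← Real.cos_abs (arg w * δ), ← Real.cos_abs (π * δ / 2)]
  refine Real.cos_le_cos_of_nonneg_of_le_pi (abs_nonneg _) ?_ hle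
  rw [abs_div, abs_mul, abs_of_pos pi_pos, abs_two]
  nlinarith [pi_pos]

theorem cos_pi_mul_div_two_mul_norm_rpow_le_re_cpow {w : ℂ} (hw : 0 ≤ w.re) {δ : ℝ}
    (hδ : |δ| ≤ 2) : Real.cos (π * δ / 2) * ‖w‖ ^ δ ≤ (w ^ (δ : ℂ)).re := by
  rw [cpow_ofReal_re, mul_comm]
  exact mul_le_mul_of_nonneg_left (cos_pi_mul_div_two_le_cos_arg_mul hw hδ) (by positivity)

end Complex

/-- For `0 < δ < 1` and `w` in the closed right half-plane, the values of the principal branch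
power `w^δ` lie in the angle `sin(π(1-δ)/2)·|w|^δ ≤ Re(w^δ)`. -/
theorem stmt_3 (δ : ℝ) (hδ0 : 0 < δ) (hδ1 : δ < 1) (w : ℂ) (hw : 0 ≤ w.re) :
    Real.sin (π*(1-δ)/2) * ‖w‖ ^ δ ≤ (w ^ (δ:ℂ)).re := by
  have hsin : Real.sin (π * (1 - δ) / 2) = Real.cos (π * δ / 2) := by
    rw [show π * (1 - δ) / 2 = π / 2 - π * δ / 2 by ring, Real.sin_pi_div_two_sub]
  rw [hsin]
  exact Complex.cos_pi_mul_div_two_mul_norm_rpow_le_re_cpow hw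
    (abs_le.mpr ⟨by linarith, by linarith⟩)
end

section
/- For 0 < δ < 1 and ζ in the open unit disk, if s is a Schur class function (holomorphic with |s| ≤ 1 on 𝔻), then Re( ((1 - s(ζ))^{1-δ} - 1) / s(ζ) ) ≤ 0 wherever s(ζ) ≠ 0, using the principal branch of the power. -/
/-!
By the fundamental theorem of calculus along the segment from `1` to `1 - u`, which stays in the
open right half-plane when `‖u‖ ≤ 1` and `u ≠ 1`,
`((1 - u)^a - 1) / u = -a ∫₀¹ (1 - t u)^(a - 1) dt`.
The integrand has nonnegative real part: `|arg (1 - t u)| ≤ π/2` and `|a - 1| ≤ 1`, so the power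
has argument in `[-π/2, π/2]`.
-/

open Real Metric

namespace Complex

lemma re_cpow_ofReal_nonneg {z : ℂ} (hz : 0 ≤ z.re) {r : ℝ} (hr : |r| ≤ 1) :
    0 ≤ (z ^ (r : ℂ)).re := by
  rcases eq_or_ne z 0 with rfl | hz0
  · rcases eq_or_ne (r : ℂ) 0 with hr0 | hr0 <;> simp [zero_cpow, *]
  have harg : |arg z * r| ≤ π / 2 := by
    rw [abs_mul]
    simpa using mul_le_mul (abs_arg_le_pi_div_two_iff.mpr hz) hr (abs_nonneg r) (by positivity)
  rw [cpow_def_of_ne_zero hz0, exp_re]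
  have hcos : 0 ≤ Real.cos (arg z * r) := cos_nonneg_of_mem_Icc (abs_le.mp harg)
  simpa [log_im] using mul_nonneg (Real.exp_pos _).le hcos

lemma re_lt_one_of_norm_le_one {u : ℂ} (hu : ‖u‖ ≤ 1) (hu1 : u ≠ 1) : u.re < 1 := by
  by_contra! h
  have hre : u.re = ‖u‖ := le_antisymm (re_le_norm u) (hu.trans h)
  have him : u.im = 0 := (re_eq_norm.mp hre).2.symm
  exact hu1 (ext (le_antisymm (hre ▸ hu) h) him)

lemma re_one_sub_ofReal_mul_pos {u : ℂ} (hu : ‖u‖ ≤ 1) (hu1 : u ≠ 1) {t : ℝ}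
    (ht : t ∈ Set.Icc (0 : ℝ) 1) : 0 < (1 - t * u).re := by
  have hre := re_lt_one_of_norm_le_one hu hu1
  simp only [sub_re, one_re, re_ofReal_mul, sub_pos]
  rcases le_or_gt u.re 0 with h | h
  · nlinarith [ht.1]
  · nlinarith [ht.2]

lemma intervalIntegrable_one_sub_ofReal_mul_cpow {u : ℂ}
    (hu : ∀ t ∈ Set.Icc (0 : ℝ) 1, 1 - t * u ∈ slitPlane) (c : ℂ) :
    IntervalIntegrable (fun t : ℝ ↦ (1 - t * u) ^ c) MeasureTheory.volume 0 1 := by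
  rw [← Set.uIcc_of_le zero_le_one] at hu
  refine ContinuousOn.intervalIntegrable fun t ht ↦ ?_
  exact ((continuousAt_cpow_const (hu t ht)).comp
    (f := fun t : ℝ ↦ 1 - t * u) (by fun_prop)).continuousWithinAt

lemma one_sub_cpow_sub_one_eq_neg_mul_integral {u : ℂ}
    (hu : ∀ t ∈ Set.Icc (0 : ℝ) 1, 1 - t * u ∈ slitPlane) (c : ℂ) :
    (1 - u) ^ c - 1 = -(u * c) * ∫ t in (0 : ℝ)..1, (1 - t * u) ^ (c - 1) := by
  have hderiv : ∀ t ∈ Set.uIcc (0 : ℝ) 1,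
      HasDerivAt (fun t : ℝ ↦ (1 - t * u) ^ c) (-(u * c) * (1 - t * u) ^ (c - 1)) t := by
    intro t ht
    rw [Set.uIcc_of_le zero_le_one] at ht
    have hlin : HasDerivAt (fun t : ℝ ↦ 1 - t * u) (-u) t := by
      simpa using (ofRealCLM.hasDerivAt.mul_const u).const_sub 1
    refine ((hasStrictDerivAt_cpow_const (c := c) (hu t ht)).hasDerivAt.comp t hlin).congr_deriv ?_
    ring
  rw [← intervalIntegral.integral_const_mul, intervalIntegral.integral_eq_sub_of_hasDerivAt hderiv
    ((intervalIntegrable_one_sub_ofReal_mul_cpow hu _).const_mul _)]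
  simp

theorem re_one_sub_cpow_sub_one_div_nonpos {u : ℂ} (hu : ‖u‖ ≤ 1) {a : ℝ} (ha0 : 0 ≤ a)
    (ha2 : a ≤ 2) : (((1 - u) ^ (a : ℂ) - 1) / u).re ≤ 0 := by
  rcases eq_or_ne u 1 with rfl | hu1
  · rcases eq_or_ne (a : ℂ) 0 with ha | ha <;> simp [zero_cpow, *]
  rcases eq_or_ne u 0 with rfl | hu0
  · simp
  have hpos := fun t (ht : t ∈ Set.Icc (0 : ℝ) 1) ↦ re_one_sub_ofReal_mul_pos hu hu1 ht
  have hslit : ∀ t ∈ Set.Icc (0 : ℝ) 1, 1 - t * u ∈ slitPlane := fun t ht ↦ Or.inl (hpos t ht)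
  set I := ∫ t in (0 : ℝ)..1, (1 - t * u) ^ ((a : ℂ) - 1)
  have hI : 0 ≤ I.re := by
    have hexp : (a : ℂ) - 1 = ((a - 1 : ℝ) : ℂ) := by push_cast; ring
    have hre : I.re = ∫ t in (0 : ℝ)..1, ((1 - t * u) ^ ((a : ℂ) - 1)).re :=
      (intervalIntegral.intervalIntegral_re (intervalIntegrable_one_sub_ofReal_mul_cpow hslit _)).symm
    rw [hre]
    refine intervalIntegral.integral_nonneg zero_le_one fun t ht ↦ ?_
    rw [hexp]
    exact re_cpow_ofReal_nonneg (hpos t ht).le (abs_le.mpr ⟨by linarith, by linarith⟩)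
  rw [one_sub_cpow_sub_one_eq_neg_mul_integral hslit, neg_mul, mul_assoc, neg_div,
    mul_div_cancel_left₀ _ hu0, neg_re, re_ofReal_mul, neg_nonpos]
  exact mul_nonneg ha0 hI

end Complex

theorem stmt_5_general (δ : ℝ) (hδ0 : 0 < δ) (hδ1 : δ < 1) (s : ℂ → ℂ)
    (hbd : ∀ z ∈ ball (0:ℂ) 1, ‖s z‖ ≤ 1)
    (ζ : ℂ) (hζ : ζ ∈ ball (0:ℂ) 1) :
    ((((1:ℂ) - s ζ) ^ (((1 - δ : ℝ)):ℂ) - 1) / s ζ).re ≤ 0 :=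
  Complex.re_one_sub_cpow_sub_one_div_nonpos (hbd ζ hζ) (by linarith) (by linarith)

/-- For `0 < δ < 1` and a Schur class function `s` (holomorphic on the unit disk with `|s| ≤ 1`),
wherever `s ζ ≠ 0` one has `Re(((1 - s ζ)^{1-δ} - 1)/ s ζ) ≤ 0` (principal branch power). -/
theorem stmt_5 (δ : ℝ) (hδ0 : 0 < δ) (hδ1 : δ < 1) (s : ℂ → ℂ)
    (hs : DifferentiableOn ℂ s (ball (0:ℂ) 1))
    (hbd : ∀ z ∈ ball (0:ℂ) 1, ‖s z‖ ≤ 1)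
    (ζ : ℂ) (hζ : ζ ∈ ball (0:ℂ) 1) (hne : s ζ ≠ 0) :
    ((((1:ℂ) - s ζ) ^ (((1 - δ : ℝ)):ℂ) - 1) / s ζ).re ≤ 0 :=
  stmt_5_general δ hδ0 hδ1 s hbd ζ hζ
end

section
/- Let A ≥ 0 be a random variable with 𝔼(A²) < ∞, M > 1, and E_j = {A > M^j} for j ≥ 0. Then Σ_{i=0}^∞ M^i · 𝔼(1_{E_{i+8}} · A) ≤ M^{−6} · 𝔼(A²). -/
/-!
Fix `ω` and put `a = A ω`. The indices `i` with `M ^ (i + k) < a` satisfy `M ^ i < a / M ^ k`, and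
for `M ≥ 2` a sum of distinct powers of `M` is at most `M` times its largest term, so
`∑ᵢ M ^ i * 1{M ^ (i + k) < a} * a ≤ M ^ (1 - k) * a ^ 2`. Integrating this pointwise bound gives
`∑ᵢ M ^ i * ∫_{M ^ (i + k) < A} A ≤ M ^ (1 - k) * ∫ A ^ 2`; take `k = 8` and use `M ^ (-7) ≤ M ^ (-6)`.
-/

open MeasureTheory Finset

lemma geom_sum_le_pow {M : ℝ} (hM : 2 ≤ M) (n : ℕ) : ∑ i ∈ range n, M ^ i ≤ M ^ n := by
  induction n with
  | zero => simp
  | succ n ih =>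
    rw [sum_range_succ, pow_succ]
    nlinarith [pow_nonneg (by linarith : (0 : ℝ) ≤ M) n]

lemma sum_pow_le_mul_of_forall_pow_lt {M x : ℝ} (hM : 2 ≤ M) (hx : 0 ≤ x) {t : Finset ℕ}
    (ht : ∀ i ∈ t, M ^ i < x) : ∑ i ∈ t, M ^ i ≤ M * x := by
  rcases t.eq_empty_or_nonempty with rfl | hne
  · simpa using mul_nonneg (by linarith) hx
  calc ∑ i ∈ t, M ^ i ≤ ∑ i ∈ range (t.max' hne + 1), M ^ i :=
        sum_le_sum_of_subset_of_nonneg (fun i hi => mem_range_succ_iff.mpr (t.le_max' i hi))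
          fun i _ _ => by positivity
    _ ≤ M ^ (t.max' hne + 1) := geom_sum_le_pow hM _
    _ = M * M ^ t.max' hne := pow_succ' M _
    _ ≤ M * x := by gcongr; exact (ht _ (t.max'_mem hne)).le

lemma sum_ite_pow_mul_le {M : ℝ} (hM : 2 ≤ M) (k : ℕ) (a : ℝ) (s : Finset ℕ) :
    ∑ i ∈ s, (if M ^ (i + k) < a then M ^ i * a else 0) ≤ M ^ (1 - k : ℤ) * a ^ 2 := by
  have hM0 : 0 < M := by linarith
  rcases lt_or_ge a 0 with ha | ha
  · rw [sum_eq_zero fun i _ => if_neg (by linarith [pow_pos hM0 (i + k)])]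
    positivity
  have hpow : ∀ i, M ^ (i + k) < a ↔ M ^ i < a / M ^ k := fun i => by
    rw [lt_div_iff₀ (by positivity), pow_add]
  calc ∑ i ∈ s, (if M ^ (i + k) < a then M ^ i * a else 0)
      = (∑ i ∈ s with M ^ (i + k) < a, M ^ i) * a := by rw [sum_mul, sum_filter]
    _ ≤ (M * (a / M ^ k)) * a := by
        gcongr
        exact sum_pow_le_mul_of_forall_pow_lt hM (by positivity) fun i hi =>
          (hpow i).mp (mem_filter.mp hi).2
    _ = M ^ (1 - k : ℤ) * a ^ 2 := by
        rw [zpow_sub₀ hM0.ne', zpow_one, zpow_natCast]; ring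

lemma integrableOn_lt_of_integrable_sq {Ω : Type*} [MeasurableSpace Ω] {μ : Measure Ω}
    {f : Ω → ℝ} (hf : Measurable f) (hf2 : Integrable (fun ω => f ω ^ 2) μ) {c : ℝ} (hc : 0 < c) :
    IntegrableOn f {ω | c < f ω} μ := by
  refine (hf2.integrableOn.div_const c).mono' hf.aestronglyMeasurable.restrict ?_
  filter_upwards [ae_restrict_mem (measurableSet_lt measurable_const hf)] with ω hω
  have hω : c < f ω := hω
  rw [Real.norm_eq_abs, abs_of_pos (hc.trans hω), le_div_iff₀ hc]
  nlinarith

theorem tsum_pow_mul_setIntegral_le {Ω : Type*} [MeasurableSpace Ω] (μ : Measure Ω)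
    {A : Ω → ℝ} (hA : Measurable A) (hA2 : Integrable (fun ω => A ω ^ 2) μ)
    {M : ℝ} (hM : 2 ≤ M) (k : ℕ) :
    ∑' i : ℕ, M ^ i * ∫ ω in {ω | M ^ (i + k) < A ω}, A ω ∂μ
      ≤ M ^ (1 - k : ℤ) * ∫ ω, A ω ^ 2 ∂μ := by
  have hE : ∀ i : ℕ, MeasurableSet {ω | M ^ (i + k) < A ω} :=
    fun i => measurableSet_lt measurable_const hA
  have hint : ∀ i : ℕ, Integrable ({ω | M ^ (i + k) < A ω}.indicator fun ω => M ^ i * A ω) μ :=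
    fun i => IntegrableOn.integrable_indicator
      ((integrableOn_lt_of_integrable_sq hA hA2 (by positivity)).const_mul (M ^ i)) (hE i)
  refine tsum_le_of_sum_le' (by positivity) fun s => ?_
  calc ∑ i ∈ s, M ^ i * ∫ ω in {ω | M ^ (i + k) < A ω}, A ω ∂μ
      = ∫ ω, ∑ i ∈ s, {ω | M ^ (i + k) < A ω}.indicator (fun ω => M ^ i * A ω) ω ∂μ := by
        rw [integral_finsetSum s fun i _ => hint i]
        exact sum_congr rfl fun i _ => by rw [integral_indicator (hE i), integral_const_mul]
    _ ≤ ∫ ω, M ^ (1 - k : ℤ) * A ω ^ 2 ∂μ := by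
        refine integral_mono (integrable_finsetSum s fun i _ => hint i) (hA2.const_mul _)
          fun ω => ?_
        simpa only [Set.indicator_apply, Set.mem_ofPred_eq] using
          sum_ite_pow_mul_le hM k (A ω) s
    _ = M ^ (1 - k : ℤ) * ∫ ω, A ω ^ 2 ∂μ := integral_const_mul _ _

theorem stmt_12_general {Ω : Type*} [MeasurableSpace Ω] (μ : Measure Ω)
    (A : Ω → ℝ) (hA : Measurable A)
    (hint : Integrable (fun ω => (A ω)^2) μ)
    (M : ℝ) (hM : 2 ≤ M) :
    ∑' i : ℕ, M ^ i * ∫ ω in {ω | M ^ (i+8) < A ω}, A ω ∂μ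
      ≤ M ^ (-6 : ℤ) * ∫ ω, (A ω)^2 ∂μ :=
  (tsum_pow_mul_setIntegral_le μ hA hint hM 8).trans <|
    mul_le_mul_of_nonneg_right (zpow_le_zpow_right₀ (by linarith) (by norm_num))
      (integral_nonneg fun ω => sq_nonneg (A ω))

/-- Lemma 3.2 of the paper (measure-theoretic form): for `A ≥ 0` with `𝔼(A²) < ∞`, `M ≥ 2`,
and `E_j = {A > M^j}`, one has `Σ_{i≥0} M^i 𝔼(1_{E_{i+8}} A) ≤ M^{-6} 𝔼(A²)`. -/
theorem stmt_12 {Ω : Type*} [MeasurableSpace Ω] (μ : Measure Ω) [IsProbabilityMeasure μ]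
    (A : Ω → ℝ) (hA : Measurable A) (hA0 : ∀ ω, 0 ≤ A ω)
    (hint : Integrable (fun ω => (A ω)^2) μ)
    (M : ℝ) (hM : 2 ≤ M) :
    ∑' i : ℕ, M ^ i * ∫ ω in {ω | M ^ (i+8) < A ω}, A ω ∂μ
      ≤ M ^ (-6 : ℤ) * ∫ ω, (A ω)^2 ∂μ :=
  stmt_12_general μ A hA hint M hM
end

section
/- Let A ≥ 0 be a random variable with 𝔼(A²) = 1 and M ≥ 2. Let E_j = {A > M^j}. Suppose (d_i)_{i≥0} and (w_i)_{i≥0} are random variables satisfying: |d_i| ≤ 2M^{i+1}, d_i supported on E_i, |1 − w_i| ≤ 2, 𝔼|1 − w_i|² ≤ 2M^{−i−8} 𝔼(1_{E_{i+8}} A), and for j ≥ i+8 the cross terms obey |𝔼(d_i(1−w_i) d_j(1−w_j))| ≤ 16 M^{i+1} M^{j+1} ℙ(E_j). Then 𝔼(|Σ_{i=0}^∞ d_i(1 − w_i)|²) ≤ C M^{−6} for an absolute constant C. -/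
/-!
Put `a_i = ‖d_i (1 - w_i)‖`, so `‖∑ d_i (1 - w_i)‖ ≤ ∑ a_i` and `𝔼(∑ a_i)² = ∑_{i,j} 𝔼(a_i a_j)`.
For `|i - j| < 8` use `a_i a_j ≤ (a_i² + a_j²)/2`: each index has at most 16 such partners, and
`∑ 𝔼 a_i² ≤ 8 M⁻⁶ ∑ M^i 𝔼(1_{E_{i+8}} A) ≤ 16 M⁻⁶ 𝔼 A²`, since the geometric sum of the `M^i` with
`M^{i+8} < A` is at most `2A`. For `i + 8 ≤ j`, `a_j` lives on `E_j`, so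
`𝔼(a_i a_j) ≤ 16 M^{i+1} M^{j+1} ℙ(E_j)`; summing the geometric series in `i` leaves
`32 M⁻⁶ M^{2j} ℙ(E_j)`, and `∑_j M^{2j} ℙ(E_j) ≤ 2 𝔼 A²` for the same reason. The series is
pointwise a finite sum (`d_i = 0` once `M^i ≥ A`) and its partial sums are dominated by `(8 M A)²`,
so the bound passes to the limit.
-/

open MeasureTheory Finset Filter Topology

lemma geom_sum_range_succ_le_two_mul {r : ℝ} (hr : 2 ≤ r) (n : ℕ) :
    ∑ i ∈ range (n + 1), r ^ i ≤ 2 * r ^ n := by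
  induction n with
  | zero => simp
  | succ n ih =>
    rw [sum_range_succ, pow_succ]
    nlinarith [pow_nonneg (show (0 : ℝ) ≤ r by linarith) n]

lemma sum_pow_le_two_mul_of_pow_le {r B : ℝ} (hr : 2 ≤ r) (hB : 0 ≤ B) {s : Finset ℕ}
    (h : ∀ i ∈ s, r ^ i ≤ B) : ∑ i ∈ s, r ^ i ≤ 2 * B := by
  rcases s.eq_empty_or_nonempty with rfl | hs
  · simpa using hB
  have hsub : s ⊆ range (s.max' hs + 1) := fun i hi =>
    mem_range.2 (Nat.lt_succ_of_le (s.le_max' i hi))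
  calc ∑ i ∈ s, r ^ i ≤ ∑ i ∈ range (s.max' hs + 1), r ^ i :=
        sum_le_sum_of_subset_of_nonneg hsub fun i _ _ => by positivity
    _ ≤ 2 * r ^ s.max' hs := geom_sum_range_succ_le_two_mul hr _
    _ ≤ 2 * B := by linarith [h _ (s.max'_mem hs)]

lemma card_filter_near_le (s : Finset ℕ) (b i : ℕ) :
    #{j ∈ s | ¬ i + b ≤ j ∧ ¬ j + b ≤ i} ≤ 2 * b :=
  calc #{j ∈ s | ¬ i + b ≤ j ∧ ¬ j + b ≤ i} ≤ #(Ico (i - b) (i + b)) :=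
        card_le_card fun j hj => by simp only [mem_filter, mem_Ico] at hj ⊢; omega
    _ ≤ 2 * b := by rw [Nat.card_Ico]; omega

lemma sum_sum_le_of_band {T : ℕ → ℕ → ℝ} {Q : ℕ → ℝ} (s : Finset ℕ) {b : ℕ} (hb : 0 < b)
    (hT : ∀ i j, T i j = T j i) (hQ : ∀ i, 0 ≤ Q i) (hTQ : ∀ i j, T i j ≤ (Q i + Q j) / 2) :
    ∑ i ∈ s, ∑ j ∈ s, T i j ≤
      2 * b * ∑ i ∈ s, Q i + 2 * ∑ j ∈ s, ∑ i ∈ s with i + b ≤ j, T i j := by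
  have hsplit : ∀ i, ∑ j ∈ s, T i j = ∑ j ∈ s with i + b ≤ j, T i j +
      ∑ j ∈ s with j + b ≤ i, T i j + ∑ j ∈ s with ¬ i + b ≤ j ∧ ¬ j + b ≤ i, T i j := by
    intro i
    rw [← sum_filter_add_sum_filter_not s (i + b ≤ ·), add_assoc,
      ← sum_filter_add_sum_filter_not {j ∈ s | ¬ i + b ≤ j} (· + b ≤ i), filter_filter,
      filter_filter]
    congr 2
    exact sum_congr (filter_congr fun j _ => by omega) fun _ _ => rfl
  have hup : ∑ i ∈ s, ∑ j ∈ s with i + b ≤ j, T i j = ∑ j ∈ s, ∑ i ∈ s with i + b ≤ j, T i j := by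
    simp only [sum_filter]; exact sum_comm
  have hdown : ∑ i ∈ s, ∑ j ∈ s with j + b ≤ i, T i j = ∑ j ∈ s, ∑ i ∈ s with i + b ≤ j, T i j := by
    simp only [sum_filter]; exact sum_congr rfl fun i _ => sum_congr rfl fun j _ => by rw [hT]
  have hnear : ∑ i ∈ s, ∑ j ∈ s with ¬ i + b ≤ j ∧ ¬ j + b ≤ i, T i j ≤ 2 * b * ∑ i ∈ s, Q i := by
    have hrow : ∑ i ∈ s, ∑ j ∈ s with ¬ i + b ≤ j ∧ ¬ j + b ≤ i, Q i ≤ 2 * b * ∑ i ∈ s, Q i := by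
      rw [mul_sum]
      refine sum_le_sum fun i _ => ?_
      rw [sum_const, nsmul_eq_mul]
      exact mul_le_mul_of_nonneg_right (by exact_mod_cast card_filter_near_le s b i) (hQ i)
    have hcol : ∑ i ∈ s, ∑ j ∈ s with ¬ i + b ≤ j ∧ ¬ j + b ≤ i, Q j =
        ∑ i ∈ s, ∑ j ∈ s with ¬ i + b ≤ j ∧ ¬ j + b ≤ i, Q i := by
      simp only [sum_filter]
      rw [sum_comm]
      exact sum_congr rfl fun i _ => sum_congr rfl fun j _ => if_congr and_comm rfl rfl
    calc _ ≤ ∑ i ∈ s, ∑ j ∈ s with ¬ i + b ≤ j ∧ ¬ j + b ≤ i, (Q i + Q j) / 2 :=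
          sum_le_sum fun i _ => sum_le_sum fun j _ => hTQ i j
      _ = (∑ i ∈ s, ∑ j ∈ s with ¬ i + b ≤ j ∧ ¬ j + b ≤ i, Q i +
            ∑ i ∈ s, ∑ j ∈ s with ¬ i + b ≤ j ∧ ¬ j + b ≤ i, Q j) / 2 := by
          simp only [← sum_add_distrib, sum_div]
      _ ≤ 2 * b * ∑ i ∈ s, Q i := by rw [hcol]; linarith
  simp only [hsplit, sum_add_distrib, hup, hdown]
  linarith

lemma sum_le_mul_of_le_pow {a : ℕ → ℝ} {x M : ℝ} (hM : 2 ≤ M) (hx : 0 ≤ x)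
    (hab : ∀ i, a i ≤ 4 * M ^ (i + 1)) (hsupp : ∀ i, x ≤ M ^ i → a i = 0) (s : Finset ℕ) :
    ∑ i ∈ s, a i ≤ 8 * M * x :=
  calc ∑ i ∈ s, a i ≤ ∑ i ∈ s with M ^ i < x, 4 * M * M ^ i := by
        rw [sum_filter]
        refine sum_le_sum fun i _ => ?_
        split_ifs with h
        · exact (hab i).trans_eq (by ring)
        · exact (hsupp i (not_lt.1 h)).le
    _ ≤ 4 * M * (2 * x) := by
        rw [← mul_sum]
        exact mul_le_mul_of_nonneg_left
          (sum_pow_le_two_mul_of_pow_le hM hx fun i hi => (mem_filter.1 hi).2.le) (by linarith)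
    _ = 8 * M * x := by ring

lemma integral_mul_le_add_sq_div_two {Ω : Type*} [MeasurableSpace Ω] {μ : Measure Ω}
    {f g : Ω → ℝ} (hfg : Integrable (fun ω => f ω * g ω) μ) (hf : Integrable (fun ω => f ω ^ 2) μ)
    (hg : Integrable (fun ω => g ω ^ 2) μ) :
    ∫ ω, f ω * g ω ∂μ ≤ ((∫ ω, f ω ^ 2 ∂μ) + ∫ ω, g ω ^ 2 ∂μ) / 2 := by
  rw [← integral_add hf hg, ← integral_div]
  exact integral_mono hfg ((hf.add hg).div_const 2) fun ω => by
    nlinarith [sq_nonneg (f ω - g ω)]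

lemma integral_norm_mul_sq_le {Ω R : Type*} [MeasurableSpace Ω] [NormedRing R] {μ : Measure Ω}
    {f g : Ω → R} {c : ℝ} (hfc : ∀ ω, ‖f ω‖ ≤ c) (hg : Integrable (fun ω => ‖g ω‖ ^ 2) μ) :
    ∫ ω, ‖f ω * g ω‖ ^ 2 ∂μ ≤ c ^ 2 * ∫ ω, ‖g ω‖ ^ 2 ∂μ := by
  rw [← integral_const_mul]
  refine integral_mono_of_nonneg (.of_forall fun ω => by positivity) (hg.const_mul _)
    (.of_forall fun ω => ?_)
  calc ‖f ω * g ω‖ ^ 2 ≤ (‖f ω‖ * ‖g ω‖) ^ 2 := pow_le_pow_left₀ (norm_nonneg _) (norm_mul_le _ _) 2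
    _ ≤ (c * ‖g ω‖) ^ 2 := by gcongr; exact hfc ω
    _ = c ^ 2 * ‖g ω‖ ^ 2 := mul_pow _ _ _

section
variable {Ω : Type*} [MeasurableSpace Ω] {μ : Measure Ω} [IsFiniteMeasure μ] {A : Ω → ℝ} {M : ℝ}
  {a : ℕ → Ω → ℝ}

lemma sum_pow_mul_setIntegral_le (hA : Measurable A) (hA0 : ∀ ω, 0 ≤ A ω)
    (hA2 : Integrable (fun ω => A ω ^ 2) μ) (hM : 2 ≤ M) (k N : ℕ) :
    ∑ i ∈ range N, M ^ i * ∫ ω in {ω | M ^ (i + k) < A ω}, A ω ∂μ ≤ 2 * ∫ ω, A ω ^ 2 ∂μ := by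
  have hAint : Integrable A μ :=
    ((memLp_two_iff_integrable_sq hA.aestronglyMeasurable).2 hA2).integrable one_le_two
  have hS : ∀ i : ℕ, MeasurableSet {ω | M ^ (i + k) < A ω} :=
    fun i => measurableSet_lt measurable_const hA
  have hpt : ∀ ω, ∑ i ∈ range N, M ^ i * {ω | M ^ (i + k) < A ω}.indicator A ω ≤ 2 * A ω ^ 2 := by
    intro ω
    have hgeom : ∑ i ∈ range N with M ^ (i + k) < A ω, M ^ i ≤ 2 * A ω :=
      sum_pow_le_two_mul_of_pow_le hM (hA0 ω) fun i hi =>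
        (pow_le_pow_right₀ (by linarith) (Nat.le_add_right i k)).trans (mem_filter.1 hi).2.le
    calc ∑ i ∈ range N, M ^ i * {ω | M ^ (i + k) < A ω}.indicator A ω
        = (∑ i ∈ range N with M ^ (i + k) < A ω, M ^ i) * A ω := by
          rw [sum_mul, sum_filter]
          exact sum_congr rfl fun i _ => by
            by_cases h : M ^ (i + k) < A ω <;> simp [h]
      _ ≤ 2 * A ω * A ω := mul_le_mul_of_nonneg_right hgeom (hA0 ω)
      _ = 2 * A ω ^ 2 := by ring
  calc ∑ i ∈ range N, M ^ i * ∫ ω in {ω | M ^ (i + k) < A ω}, A ω ∂μ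
      = ∫ ω, ∑ i ∈ range N, M ^ i * {ω | M ^ (i + k) < A ω}.indicator A ω ∂μ := by
        rw [integral_finsetSum _ fun i _ => (hAint.indicator (hS i)).const_mul _]
        simp only [integral_const_mul, integral_indicator (hS _)]
    _ ≤ ∫ ω, 2 * A ω ^ 2 ∂μ :=
        integral_mono (integrable_finsetSum _ fun i _ => (hAint.indicator (hS i)).const_mul _)
          (hA2.const_mul 2) hpt
    _ = 2 * ∫ ω, A ω ^ 2 ∂μ := integral_const_mul _ _

lemma sum_pow_two_mul_measureReal_le (hA : Measurable A) (hA2 : Integrable (fun ω => A ω ^ 2) μ)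
    (hM : 2 ≤ M) (N : ℕ) :
    ∑ j ∈ range N, M ^ (2 * j) * μ.real {ω | M ^ j < A ω} ≤ 2 * ∫ ω, A ω ^ 2 ∂μ := by
  have hS : ∀ j : ℕ, MeasurableSet {ω | M ^ j < A ω} :=
    fun j => measurableSet_lt measurable_const hA
  have hpt : ∀ ω, ∑ j ∈ range N, {ω | M ^ j < A ω}.indicator (fun _ => M ^ (2 * j)) ω
      ≤ 2 * A ω ^ 2 := by
    intro ω
    calc ∑ j ∈ range N, {ω | M ^ j < A ω}.indicator (fun _ => M ^ (2 * j)) ω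
        = ∑ j ∈ range N with M ^ j < A ω, (M ^ 2) ^ j := by
          rw [sum_filter]
          exact sum_congr rfl fun j _ => by
            by_cases h : M ^ j < A ω <;> simp [h, pow_mul]
      _ ≤ 2 * A ω ^ 2 := sum_pow_le_two_mul_of_pow_le (by nlinarith) (sq_nonneg _) fun j hj => by
          rw [← pow_mul, mul_comm, pow_mul]
          exact pow_le_pow_left₀ (by positivity) (mem_filter.1 hj).2.le 2
  calc ∑ j ∈ range N, M ^ (2 * j) * μ.real {ω | M ^ j < A ω}
      = ∫ ω, ∑ j ∈ range N, {ω | M ^ j < A ω}.indicator (fun _ => M ^ (2 * j)) ω ∂μ := by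
        rw [integral_finsetSum _ fun j _ => (integrable_const _).indicator (hS j)]
        simp only [integral_indicator_const _ (hS _), smul_eq_mul, mul_comm]
    _ ≤ ∫ ω, 2 * A ω ^ 2 ∂μ :=
        integral_mono (integrable_finsetSum _ fun j _ => (integrable_const _).indicator (hS j))
          (hA2.const_mul 2) hpt
    _ = 2 * ∫ ω, A ω ^ 2 ∂μ := integral_const_mul _ _

lemma integrable_mul_of_le_pow (ha : ∀ i, AEStronglyMeasurable (a i) μ) (ha0 : ∀ i ω, 0 ≤ a i ω)
    (hab : ∀ i ω, a i ω ≤ 4 * M ^ (i + 1)) (i j : ℕ) :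
    Integrable (fun ω => a i ω * a j ω) μ :=
  .of_bound ((ha i).mul (ha j)) _ <| .of_forall fun ω => by
    rw [Real.norm_eq_abs, abs_of_nonneg (mul_nonneg (ha0 i ω) (ha0 j ω))]
    exact mul_le_mul (hab i ω) (hab j ω) (ha0 j ω) (by linarith [ha0 i ω, hab i ω])

lemma integral_mul_le_measureReal (hA : Measurable A) (ha : ∀ i, AEStronglyMeasurable (a i) μ)
    (ha0 : ∀ i ω, 0 ≤ a i ω) (hab : ∀ i ω, a i ω ≤ 4 * M ^ (i + 1))
    (hsupp : ∀ i ω, A ω ≤ M ^ i → a i ω = 0) (i j : ℕ) :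
    ∫ ω, a i ω * a j ω ∂μ ≤ 16 * M ^ (i + 1) * M ^ (j + 1) * μ.real {ω | M ^ j < A ω} := by
  have hS : MeasurableSet {ω | M ^ j < A ω} := measurableSet_lt measurable_const hA
  calc ∫ ω, a i ω * a j ω ∂μ
      ≤ ∫ ω, {ω | M ^ j < A ω}.indicator (fun _ => 4 * M ^ (i + 1) * (4 * M ^ (j + 1))) ω ∂μ := by
        refine integral_mono (integrable_mul_of_le_pow ha ha0 hab i j)
          ((integrable_const _).indicator hS) fun ω => ?_
        by_cases h : M ^ j < A ω
        · simpa [h] using mul_le_mul (hab i ω) (hab j ω) (ha0 j ω) (by linarith [ha0 i ω, hab i ω])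
        · simp [h, hsupp j ω (not_lt.1 h)]
    _ = 16 * M ^ (i + 1) * M ^ (j + 1) * μ.real {ω | M ^ j < A ω} := by
        rw [integral_indicator_const _ hS, smul_eq_mul]; ring

lemma sum_integral_mul_le_of_add_le (hM : 2 ≤ M) (hA : Measurable A)
    (ha : ∀ i, AEStronglyMeasurable (a i) μ) (ha0 : ∀ i ω, 0 ≤ a i ω)
    (hab : ∀ i ω, a i ω ≤ 4 * M ^ (i + 1)) (hsupp : ∀ i ω, A ω ≤ M ^ i → a i ω = 0)
    (s : Finset ℕ) (j : ℕ) :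
    ∑ i ∈ s with i + 8 ≤ j, ∫ ω, a i ω * a j ω ∂μ ≤
      32 * M ^ (-6 : ℤ) * (M ^ (2 * j) * μ.real {ω | M ^ j < A ω}) := by
  set P := μ.real {ω | M ^ j < A ω}
  have hgeom : ∑ i ∈ s with i + 8 ≤ j, M ^ i ≤ 2 * (M ^ j / M ^ 8) :=
    sum_pow_le_two_mul_of_pow_le hM (by positivity) fun i hi => by
      rw [le_div_iff₀ (by positivity), ← pow_add]
      exact pow_le_pow_right₀ (by linarith) (mem_filter.1 hi).2
  calc ∑ i ∈ s with i + 8 ≤ j, ∫ ω, a i ω * a j ω ∂μ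
      ≤ ∑ i ∈ s with i + 8 ≤ j, M ^ i * (16 * M ^ (j + 2) * P) :=
        sum_le_sum fun i _ => (integral_mul_le_measureReal hA ha ha0 hab hsupp i j).trans_eq
          (by ring)
    _ ≤ 2 * (M ^ j / M ^ 8) * (16 * M ^ (j + 2) * P) := by
        rw [← sum_mul]; exact mul_le_mul_of_nonneg_right hgeom (by positivity)
    _ = 32 * M ^ (-6 : ℤ) * (M ^ (2 * j) * P) := by
        rw [zpow_neg, zpow_ofNat]; field_simp; ring

lemma integral_sq_sum_le (hM : 2 ≤ M) (hA : Measurable A) (hA0 : ∀ ω, 0 ≤ A ω)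
    (hA2 : Integrable (fun ω => A ω ^ 2) μ) (ha : ∀ i, AEStronglyMeasurable (a i) μ)
    (ha0 : ∀ i ω, 0 ≤ a i ω) (hab : ∀ i ω, a i ω ≤ 4 * M ^ (i + 1))
    (hsupp : ∀ i ω, A ω ≤ M ^ i → a i ω = 0)
    (hvar : ∀ i, ∫ ω, a i ω ^ 2 ∂μ ≤
      8 * M ^ (-6 : ℤ) * (M ^ i * ∫ ω in {ω | M ^ (i + 8) < A ω}, A ω ∂μ)) (N : ℕ) :
    ∫ ω, (∑ i ∈ range N, a i ω) ^ 2 ∂μ ≤ 384 * M ^ (-6 : ℤ) * ∫ ω, A ω ^ 2 ∂μ := by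
  have hint := integrable_mul_of_le_pow (μ := μ) ha ha0 hab
  have hsq : ∀ i, Integrable (fun ω => a i ω ^ 2) μ := fun i => by simpa [sq] using hint i i
  have hexpand : ∫ ω, (∑ i ∈ range N, a i ω) ^ 2 ∂μ =
      ∑ i ∈ range N, ∑ j ∈ range N, ∫ ω, a i ω * a j ω ∂μ := by
    simp only [sq, sum_mul_sum]
    rw [integral_finsetSum _ fun i _ => integrable_finsetSum _ fun j _ => hint i j]
    exact sum_congr rfl fun i _ => integral_finsetSum _ fun j _ => hint i j
  have hdiag : ∑ i ∈ range N, ∫ ω, a i ω ^ 2 ∂μ ≤ 16 * M ^ (-6 : ℤ) * ∫ ω, A ω ^ 2 ∂μ :=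
    calc ∑ i ∈ range N, ∫ ω, a i ω ^ 2 ∂μ
        ≤ 8 * M ^ (-6 : ℤ) * ∑ i ∈ range N, M ^ i * ∫ ω in {ω | M ^ (i + 8) < A ω}, A ω ∂μ := by
          rw [mul_sum]; exact sum_le_sum fun i _ => hvar i
      _ ≤ 8 * M ^ (-6 : ℤ) * (2 * ∫ ω, A ω ^ 2 ∂μ) := by
          gcongr; exact sum_pow_mul_setIntegral_le hA hA0 hA2 hM 8 N
      _ = 16 * M ^ (-6 : ℤ) * ∫ ω, A ω ^ 2 ∂μ := by ring
  have hfar : ∑ j ∈ range N, ∑ i ∈ range N with i + 8 ≤ j, ∫ ω, a i ω * a j ω ∂μ ≤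
      64 * M ^ (-6 : ℤ) * ∫ ω, A ω ^ 2 ∂μ :=
    calc ∑ j ∈ range N, ∑ i ∈ range N with i + 8 ≤ j, ∫ ω, a i ω * a j ω ∂μ
        ≤ 32 * M ^ (-6 : ℤ) * ∑ j ∈ range N, M ^ (2 * j) * μ.real {ω | M ^ j < A ω} := by
          rw [mul_sum]
          exact sum_le_sum fun j _ => sum_integral_mul_le_of_add_le hM hA ha ha0 hab hsupp _ j
      _ ≤ 32 * M ^ (-6 : ℤ) * (2 * ∫ ω, A ω ^ 2 ∂μ) := by
          gcongr; exact sum_pow_two_mul_measureReal_le hA hA2 hM N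
      _ = 64 * M ^ (-6 : ℤ) * ∫ ω, A ω ^ 2 ∂μ := by ring
  calc ∫ ω, (∑ i ∈ range N, a i ω) ^ 2 ∂μ
      ≤ 2 * (8 : ℕ) * ∑ i ∈ range N, ∫ ω, a i ω ^ 2 ∂μ +
          2 * ∑ j ∈ range N, ∑ i ∈ range N with i + 8 ≤ j, ∫ ω, a i ω * a j ω ∂μ := by
        rw [hexpand]
        exact sum_sum_le_of_band _ (by norm_num) (fun i j => by simp only [mul_comm])
          (fun i => integral_nonneg fun ω => sq_nonneg _)
          (fun i j => integral_mul_le_add_sq_div_two (hint i j) (hsq i) (hsq j))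
    _ ≤ 384 * M ^ (-6 : ℤ) * ∫ ω, A ω ^ 2 ∂μ := by push_cast; linarith

lemma integral_norm_tsum_sq_le {E : Type*} [NormedAddCommGroup E] {X : ℕ → Ω → E} (hM : 2 ≤ M)
    (hA : Measurable A) (hA0 : ∀ ω, 0 ≤ A ω) (hA2 : Integrable (fun ω => A ω ^ 2) μ)
    (hX : ∀ i, AEStronglyMeasurable (X i) μ) (hXb : ∀ i ω, ‖X i ω‖ ≤ 4 * M ^ (i + 1))
    (hsupp : ∀ i ω, A ω ≤ M ^ i → X i ω = 0)
    (hvar : ∀ i, ∫ ω, ‖X i ω‖ ^ 2 ∂μ ≤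
      8 * M ^ (-6 : ℤ) * (M ^ i * ∫ ω in {ω | M ^ (i + 8) < A ω}, A ω ∂μ)) :
    ∫ ω, ‖∑' i, X i ω‖ ^ 2 ∂μ ≤ 384 * M ^ (-6 : ℤ) * ∫ ω, A ω ^ 2 ∂μ := by
  have hnorm_sum : ∀ N ω, ∑ i ∈ range N, ‖X i ω‖ ≤ 8 * M * A ω := fun N ω =>
    sum_le_mul_of_le_pow hM (hA0 ω) (hXb · ω) (fun i h => by rw [hsupp i ω h, norm_zero]) _
  have hsq_le : ∀ N ω, ‖∑ i ∈ range N, X i ω‖ ^ 2 ≤ (∑ i ∈ range N, ‖X i ω‖) ^ 2 :=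
    fun N ω => pow_le_pow_left₀ (norm_nonneg _) (norm_sum_le _ _) 2
  have hdom : ∀ N ω, (∑ i ∈ range N, ‖X i ω‖) ^ 2 ≤ (8 * M) ^ 2 * A ω ^ 2 := fun N ω => by
    rw [← mul_pow]
    exact pow_le_pow_left₀ (sum_nonneg fun i _ => norm_nonneg _) (hnorm_sum N ω) 2
  have hpartial : ∀ N, ∫ ω, ‖∑ i ∈ range N, X i ω‖ ^ 2 ∂μ ≤
      384 * M ^ (-6 : ℤ) * ∫ ω, A ω ^ 2 ∂μ := fun N =>
    (integral_mono_of_nonneg (.of_forall fun ω => by positivity)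
      ((hA2.const_mul _).mono' ((aestronglyMeasurable_fun_sum _ fun i _ => (hX i).norm).pow 2)
        (.of_forall fun ω => (Real.norm_of_nonneg (sq_nonneg _)).trans_le (hdom N ω)))
      (.of_forall (hsq_le N))).trans <|
    integral_sq_sum_le hM hA hA0 hA2 (fun i => (hX i).norm) (fun i ω => norm_nonneg _) hXb
      (fun i ω h => by rw [hsupp i ω h, norm_zero]) hvar N
  have hlim : ∀ ω, Tendsto (fun N => ‖∑ i ∈ range N, X i ω‖ ^ 2) atTop
      (𝓝 (‖∑' i, X i ω‖ ^ 2)) := fun ω => by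
    obtain ⟨n, hn⟩ := pow_unbounded_of_one_lt (A ω) (by linarith : 1 < M)
    have hzero : ∀ i ∉ range n, X i ω = 0 := fun i hi =>
      hsupp i ω (hn.le.trans (pow_le_pow_right₀ (by linarith) (by simpa using hi)))
    exact (summable_of_ne_finset_zero hzero).hasSum.tendsto_sum_nat.norm.pow 2
  have hmeas : ∀ N, AEStronglyMeasurable (fun ω => ‖∑ i ∈ range N, X i ω‖ ^ 2) μ :=
    fun N => ((aestronglyMeasurable_fun_sum _ fun i _ => hX i).norm).pow 2
  refine le_of_tendsto (tendsto_integral_of_dominated_convergence _ hmeas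
    (hA2.const_mul ((8 * M) ^ 2)) (fun N => .of_forall fun ω => ?_) (.of_forall hlim))
    (.of_forall hpartial)
  exact (Real.norm_of_nonneg (sq_nonneg _)).trans_le ((hsq_le N ω).trans (hdom N ω))

end

/-- Lemma 3.3 of the paper (abstract form): with `𝔼(A²) = 1`, `M ≥ 2`, `E_j = {A > M^j}`,
`|d_i| ≤ 2M^{i+1}`, `d_i` supported on `E_i`, `|1-w_i| ≤ 2`,
`𝔼|1-w_i|² ≤ 2M^{-i-8} 𝔼(1_{E_{i+8}} A)`, and the far cross terms bounded by
`16 M^{i+1} M^{j+1} ℙ(E_j)` for `j ≥ i+8`, one has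
`𝔼|Σ_i d_i (1-w_i)|² ≤ C M^{-6}` for an absolute constant `C`. -/
theorem stmt_14 : ∃ C : ℝ, 0 < C ∧
    ∀ {Ω : Type} [MeasurableSpace Ω] (μ : Measure Ω) [IsProbabilityMeasure μ]
      (A : Ω → ℝ) (M : ℝ) (d w : ℕ → Ω → ℂ),
      2 ≤ M → Measurable A → (∀ ω, 0 ≤ A ω) →
      Integrable (fun ω => (A ω)^2) μ → (∫ ω, (A ω)^2 ∂μ) = 1 →
      (∀ i, Measurable (d i)) → (∀ i, Measurable (w i)) →
      (∀ i ω, ‖d i ω‖ ≤ 2 * M ^ (i+1)) →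
      (∀ i ω, A ω ≤ M ^ i → d i ω = 0) →
      (∀ i ω, ‖1 - w i ω‖ ≤ 2) →
      (∀ i : ℕ, ∫ ω, ‖1 - w i ω‖^2 ∂μ
          ≤ 2 * M ^ (-(i:ℤ) - 8) * ∫ ω in {ω | M ^ (i+8) < A ω}, A ω ∂μ) →
      (∀ i j : ℕ, i + 8 ≤ j →
        ‖∫ ω, d i ω * (1 - w i ω) * (d j ω * (1 - w j ω)) ∂μ‖
          ≤ 16 * M ^ (i+1) * M ^ (j+1) * (μ {ω | M ^ j < A ω}).toReal) →
      ∫ ω, ‖∑' i : ℕ, d i ω * (1 - w i ω)‖^2 ∂μ ≤ C * M ^ (-6 : ℤ) := by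
  refine ⟨384, by norm_num, fun μ _ A M d w hM hA hA0 hA2 hA2_eq hd hw hdb hdsupp hwb hwvar _ => ?_⟩
  have hw2 : ∀ i, Integrable (fun ω => ‖1 - w i ω‖ ^ 2) μ := fun i =>
    .of_bound ((measurable_const.sub (hw i)).norm.pow_const 2).aestronglyMeasurable 4 <|
      .of_forall fun ω => by
        rw [Real.norm_of_nonneg (sq_nonneg _)]
        nlinarith [hwb i ω, norm_nonneg (1 - w i ω)]
  have hvar : ∀ i, ∫ ω, ‖d i ω * (1 - w i ω)‖ ^ 2 ∂μ ≤
      8 * M ^ (-6 : ℤ) * (M ^ i * ∫ ω in {ω | M ^ (i + 8) < A ω}, A ω ∂μ) := fun i =>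
    calc ∫ ω, ‖d i ω * (1 - w i ω)‖ ^ 2 ∂μ ≤ (2 * M ^ (i + 1)) ^ 2 * ∫ ω, ‖1 - w i ω‖ ^ 2 ∂μ :=
          integral_norm_mul_sq_le (hdb i) (hw2 i)
      _ ≤ (2 * M ^ (i + 1)) ^ 2 *
            (2 * M ^ (-(i : ℤ) - 8) * ∫ ω in {ω | M ^ (i + 8) < A ω}, A ω ∂μ) := by
          gcongr; exact hwvar i
      _ = 8 * M ^ (-6 : ℤ) * (M ^ i * ∫ ω in {ω | M ^ (i + 8) < A ω}, A ω ∂μ) := by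
          rw [show -(i : ℤ) - 8 = -((i + 8 : ℕ) : ℤ) by push_cast; ring, zpow_neg, zpow_natCast,
            zpow_neg, zpow_ofNat]
          field_simp
          ring
  have := integral_norm_tsum_sq_le (X := fun i ω => d i ω * (1 - w i ω)) hM hA hA0 hA2
    (fun i => by fun_prop)
    (fun i ω => (norm_mul_le _ _).trans (mul_le_mul (hdb i ω) (hwb i ω) (norm_nonneg _)
      (by positivity)) |>.trans_eq (by ring))
    (fun i ω h => by rw [hdsupp i ω h, zero_mul]) hvar
  rwa [hA2_eq, mul_one] at this
end

section
/- Let F and G be complex random variables on a probability space with |G| ≤ |F| almost surely and F ≠ 0 a.s., and suppose S = G/F satisfies 𝔼(S) ∈ ℝ and 𝔼(S) = exp(𝔼 log|S|). Let λ > 0 and A = {|F| > λ}, and suppose |S| = 1 on Ω∖A and |S| = λ/|F| on A. If 𝔼|F|² = 1, then 𝔼|1 − S|² ≤ 2(1 − 𝔼S) ≤ 2𝔼(1_A log(|F|/λ)) ≤ (2/λ) 𝔼(1_A |F|), and 𝔼|F − G| ≤ 1/λ. -/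
/-!
Since `|S| ≤ 1`, pointwise `|1 - S|² ≤ 2 (1 - Re S)`. The prescribed values of `|S|` give
`𝔼 log |S| = -J` with `J = 𝔼 (1_A log (|F|/λ))`, so `1 - 𝔼 S = 1 - exp (-J) ≤ J`. On `A`,
`log (|F|/λ) ≤ |F|/λ` and `2 log (|F|/λ) ≤ |F|²/λ²`, whence `2 J ≤ 𝔼 |F|² / λ² = 1/λ²`.
Finally `F - G = F (1 - S)`, and Cauchy–Schwarz gives `𝔼 |F - G| ≤ (𝔼 |1 - S|²)^(1/2) ≤ 1/λ`.
-/

open MeasureTheory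

theorem Complex.norm_one_sub_sq_le_two_mul_one_sub_re {z : ℂ} (hz : ‖z‖ ≤ 1) :
    ‖1 - z‖ ^ 2 ≤ 2 * (1 - z.re) := by
  have hz2 : ‖z‖ ^ 2 ≤ 1 := pow_le_one₀ (norm_nonneg z) hz
  rw [Complex.sq_norm, Complex.normSq_apply] at hz2 ⊢
  simp only [Complex.sub_re, Complex.one_re, Complex.sub_im, Complex.one_im]
  nlinarith

theorem Real.two_mul_log_le_sq (x : ℝ) : 2 * Real.log x ≤ x ^ 2 := by
  rcases eq_or_ne x 0 with rfl | hx
  · simp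
  · have := Real.log_le_sub_one_of_pos (pow_pos (sq_pos_of_ne_zero hx) 1)
    rw [pow_one, Real.log_pow] at this
    push_cast at this
    linarith

section

variable {Ω : Type*} [MeasurableSpace Ω] {μ : Measure Ω}

theorem integral_mul_le_sqrt_integral_sq_mul_sqrt_integral_sq {f g : Ω → ℝ}
    (hf0 : 0 ≤ᵐ[μ] f) (hg0 : 0 ≤ᵐ[μ] g)
    (hfm : AEStronglyMeasurable f μ) (hgm : AEStronglyMeasurable g μ)
    (hf : Integrable (fun ω => f ω ^ 2) μ) (hg : Integrable (fun ω => g ω ^ 2) μ) :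
    ∫ ω, f ω * g ω ∂μ ≤ √(∫ ω, f ω ^ 2 ∂μ) * √(∫ ω, g ω ^ 2 ∂μ) := by
  have holder := integral_mul_le_Lp_mul_Lq_of_nonneg Real.HolderConjugate.two_two hf0 hg0
    (by simpa using (memLp_two_iff_integrable_sq hfm).2 hf)
    (by simpa using (memLp_two_iff_integrable_sq hgm).2 hg)
  rw [Real.sqrt_eq_rpow, Real.sqrt_eq_rpow]
  simpa only [Real.rpow_two] using holder

theorem integrable_norm_one_sub_sq [IsFiniteMeasure μ] {S : Ω → ℂ}
    (hSm : AEStronglyMeasurable S μ) (hS1 : ∀ᵐ ω ∂μ, ‖S ω‖ ≤ 1) :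
    Integrable (fun ω => ‖1 - S ω‖ ^ 2) μ := by
  refine .of_bound ((aestronglyMeasurable_const.sub hSm).norm.pow 2) 4 (hS1.mono fun ω h => ?_)
  have h2 : ‖1 - S ω‖ ≤ 2 := (norm_sub_le _ _).trans (by rw [norm_one]; linarith)
  rw [Real.norm_of_nonneg (by positivity)]
  nlinarith [norm_nonneg (1 - S ω)]

theorem integral_norm_one_sub_sq_le [IsProbabilityMeasure μ] {S : Ω → ℂ} (hS : Integrable S μ)
    (hS1 : ∀ᵐ ω ∂μ, ‖S ω‖ ≤ 1) :
    ∫ ω, ‖1 - S ω‖ ^ 2 ∂μ ≤ 2 * (1 - (∫ ω, S ω ∂μ).re) := by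
  have hSre : Integrable (fun ω => (S ω).re) μ := hS.re
  have hre : Integrable (fun ω => 2 * (1 - (S ω).re)) μ :=
    ((integrable_const 1).sub hSre).const_mul 2
  calc ∫ ω, ‖1 - S ω‖ ^ 2 ∂μ ≤ ∫ ω, 2 * (1 - (S ω).re) ∂μ :=
        integral_mono_of_nonneg (.of_forall fun _ => by positivity) hre
          (hS1.mono fun _ => Complex.norm_one_sub_sq_le_two_mul_one_sub_re)
    _ = 2 * (1 - (∫ ω, S ω ∂μ).re) := by
      have hre_comm : ∫ ω, (S ω).re ∂μ = (∫ ω, S ω ∂μ).re := integral_re hS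
      rw [integral_const_mul, integral_sub (integrable_const 1) hSre, hre_comm]
      simp

variable {f : Ω → ℝ} {lam : ℝ}

theorem integral_log_norm_eq_neg_setIntegral_log_div {S : Ω → ℂ} (hf : AEMeasurable f μ)
    (hS1 : ∀ᵐ ω ∂μ, f ω ≤ lam → ‖S ω‖ = 1) (hS2 : ∀ᵐ ω ∂μ, lam < f ω → ‖S ω‖ = lam / f ω) :
    ∫ ω, Real.log ‖S ω‖ ∂μ = -∫ ω in {ω | lam < f ω}, Real.log (f ω / lam) ∂μ := by
  have hA : NullMeasurableSet {ω | lam < f ω} μ := nullMeasurableSet_lt aemeasurable_const hf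
  rw [← integral_indicator₀ hA, ← integral_neg]
  refine integral_congr_ae ?_
  filter_upwards [hS1, hS2] with ω h1 h2
  by_cases hlt : lam < f ω
  · rw [Set.indicator_of_mem (s := {ω | lam < f ω}) hlt, h2 hlt, ← inv_div, Real.log_inv]
  · rw [Set.indicator_of_notMem (s := {ω | lam < f ω}) hlt, h1 (not_lt.1 hlt), Real.log_one,
      neg_zero]

theorem setIntegral_log_div_le (hfm : AEMeasurable f μ) (hlam : 0 < lam)
    (hf : IntegrableOn f {ω | lam < f ω} μ) :
    ∫ ω in {ω | lam < f ω}, Real.log (f ω / lam) ∂μ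
      ≤ (1 / lam) * ∫ ω in {ω | lam < f ω}, f ω ∂μ := by
  rw [← integral_const_mul]
  refine integral_mono_of_nonneg ?_ (hf.const_mul _) ?_ <;>
    filter_upwards [ae_restrict_mem₀ (nullMeasurableSet_lt aemeasurable_const hfm)] with ω hω
  · exact Real.log_nonneg ((one_le_div hlam).2 (le_of_lt hω))
  · rw [one_div_mul_eq_div]
    exact Real.log_le_self (div_pos (hlam.trans hω) hlam).le

theorem two_mul_setIntegral_log_div_le (hfm : AEMeasurable f μ) (hlam : 0 < lam)
    (hf : Integrable (fun ω => f ω ^ 2) μ) :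
    2 * ∫ ω in {ω | lam < f ω}, Real.log (f ω / lam) ∂μ ≤ (∫ ω, f ω ^ 2 ∂μ) / lam ^ 2 := by
  calc 2 * ∫ ω in {ω | lam < f ω}, Real.log (f ω / lam) ∂μ
      = ∫ ω in {ω | lam < f ω}, 2 * Real.log (f ω / lam) ∂μ := (integral_const_mul _ _).symm
    _ ≤ ∫ ω in {ω | lam < f ω}, f ω ^ 2 / lam ^ 2 ∂μ := by
      refine integral_mono_of_nonneg ?_ (hf.div_const _).integrableOn ?_ <;>
        filter_upwards [ae_restrict_mem₀ (nullMeasurableSet_lt aemeasurable_const hfm)] with ω hω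
      · have hlog := Real.log_nonneg ((one_le_div hlam).2 (le_of_lt hω))
        positivity
      · rw [← div_pow]
        exact Real.two_mul_log_le_sq _
    _ ≤ ∫ ω, f ω ^ 2 / lam ^ 2 ∂μ :=
      setIntegral_le_integral (hf.div_const _) (.of_forall fun _ => by positivity)
    _ = (∫ ω, f ω ^ 2 ∂μ) / lam ^ 2 := integral_div _ _

end

theorem stmt_16_general {Ω : Type*} [MeasurableSpace Ω] (μ : Measure Ω) [IsProbabilityMeasure μ]
    (F G : Ω → ℂ) (hFm : AEStronglyMeasurable F μ) (hGm : AEStronglyMeasurable G μ)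
    (hFG : ∀ᵐ ω ∂μ, ‖G ω‖ ≤ ‖F ω‖) (hFne : ∀ᵐ ω ∂μ, F ω ≠ 0)
    (S : Ω → ℂ) (hS : S = fun ω => G ω / F ω)
    (hF2 : Integrable (fun ω => ‖F ω‖^2) μ)
    (hSexp : (∫ ω, S ω ∂μ).re = Real.exp (∫ ω, Real.log ‖S ω‖ ∂μ))
    (lam : ℝ) (hlam : 0 < lam)
    (hS1 : ∀ᵐ ω ∂μ, ‖F ω‖ ≤ lam → ‖S ω‖ = 1)
    (hS2 : ∀ᵐ ω ∂μ, lam < ‖F ω‖ → ‖S ω‖ = lam / ‖F ω‖)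
    (hnorm : ∫ ω, ‖F ω‖^2 ∂μ = 1) :
    ∫ ω, ‖1 - S ω‖^2 ∂μ ≤ 2 * (1 - (∫ ω, S ω ∂μ).re) ∧
    2 * (1 - (∫ ω, S ω ∂μ).re)
      ≤ 2 * ∫ ω in {ω | lam < ‖F ω‖}, Real.log (‖F ω‖ / lam) ∂μ ∧
    2 * ∫ ω in {ω | lam < ‖F ω‖}, Real.log (‖F ω‖ / lam) ∂μ
      ≤ (2/lam) * ∫ ω in {ω | lam < ‖F ω‖}, ‖F ω‖ ∂μ ∧
    ∫ ω, ‖F ω - G ω‖ ∂μ ≤ 1/lam := by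
  set J := ∫ ω in {ω | lam < ‖F ω‖}, Real.log (‖F ω‖ / lam) ∂μ
  have hFn : AEMeasurable (fun ω => ‖F ω‖) μ := hFm.norm.aemeasurable
  have hSm : AEStronglyMeasurable S μ :=
    hS ▸ (hGm.aemeasurable.div hFm.aemeasurable).aestronglyMeasurable
  have hSle : ∀ᵐ ω ∂μ, ‖S ω‖ ≤ 1 := by
    filter_upwards [hFG, hFne] with ω hle hne
    rw [hS, norm_div]
    exact div_le_one_of_le₀ hle (norm_nonneg _)
  have h1S := integral_norm_one_sub_sq_le (Integrable.of_bound hSm 1 hSle) hSle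
  have hSJ : 1 - (∫ ω, S ω ∂μ).re ≤ J := by
    rw [hSexp, integral_log_norm_eq_neg_setIntegral_log_div hFn hS1 hS2]
    linarith [Real.add_one_le_exp (-J)]
  have hJ2 := two_mul_setIntegral_log_div_le hFn hlam hF2
  rw [hnorm] at hJ2
  have hFG_eq : (fun ω => ‖F ω - G ω‖) =ᵐ[μ] fun ω => ‖F ω‖ * ‖1 - S ω‖ := by
    filter_upwards [hFne] with ω hne
    rw [← norm_mul, hS, mul_sub, mul_one, mul_div_cancel₀ _ hne]
  refine ⟨h1S, by linarith, ?_, ?_⟩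
  · have hF1 : Integrable (fun ω => ‖F ω‖) μ :=
      (((memLp_two_iff_integrable_sq_norm hFm).2 hF2).integrable one_le_two).norm
    have hJ1 := setIntegral_log_div_le hFn hlam hF1.integrableOn
    rw [div_eq_mul_one_div 2 lam, mul_assoc]
    exact mul_le_mul_of_nonneg_left hJ1 zero_le_two
  calc ∫ ω, ‖F ω - G ω‖ ∂μ = ∫ ω, ‖F ω‖ * ‖1 - S ω‖ ∂μ := integral_congr_ae hFG_eq
    _ ≤ √(∫ ω, ‖F ω‖ ^ 2 ∂μ) * √(∫ ω, ‖1 - S ω‖ ^ 2 ∂μ) :=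
      integral_mul_le_sqrt_integral_sq_mul_sqrt_integral_sq (.of_forall fun _ => norm_nonneg _)
        (.of_forall fun _ => norm_nonneg _) hFm.norm (aestronglyMeasurable_const.sub hSm).norm
        hF2 (integrable_norm_one_sub_sq hSm hSle)
    _ ≤ √1 * √((1 / lam) ^ 2) := by
      gcongr
      · exact hnorm.le
      · rw [div_pow, one_pow]; linarith
    _ = 1 / lam := by rw [Real.sqrt_one, one_mul, Real.sqrt_sq (by positivity)]

/-- Abstract form of Theorem 3.3: `F, G` complex random variables with `|G| ≤ |F|` a.s.,
`F ≠ 0` a.s., `S = G/F` with `𝔼S` real, `𝔼S = exp(𝔼 log|S|)`, `A = {|F| > λ}`, `|S| = 1` off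
`A`, `|S| = λ/|F|` on `A`, `𝔼|F|² = 1`. Then
`𝔼|1-S|² ≤ 2(1-𝔼S) ≤ 2𝔼(1_A log(|F|/λ)) ≤ (2/λ)𝔼(1_A |F|)` and `𝔼|F-G| ≤ 1/λ`. -/
theorem stmt_16 {Ω : Type*} [MeasurableSpace Ω] (μ : Measure Ω) [IsProbabilityMeasure μ]
    (F G : Ω → ℂ) (hFm : AEStronglyMeasurable F μ) (hGm : AEStronglyMeasurable G μ)
    (hFG : ∀ᵐ ω ∂μ, ‖G ω‖ ≤ ‖F ω‖) (hFne : ∀ᵐ ω ∂μ, F ω ≠ 0)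
    (S : Ω → ℂ) (hS : S = fun ω => G ω / F ω)
    (hF2 : Integrable (fun ω => ‖F ω‖^2) μ)
    (hlogint : Integrable (fun ω => Real.log ‖S ω‖) μ)
    (hSreal : (∫ ω, S ω ∂μ).im = 0)
    (hSexp : (∫ ω, S ω ∂μ).re = Real.exp (∫ ω, Real.log ‖S ω‖ ∂μ))
    (lam : ℝ) (hlam : 0 < lam)
    (hS1 : ∀ᵐ ω ∂μ, ‖F ω‖ ≤ lam → ‖S ω‖ = 1)
    (hS2 : ∀ᵐ ω ∂μ, lam < ‖F ω‖ → ‖S ω‖ = lam / ‖F ω‖)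
    (hnorm : ∫ ω, ‖F ω‖^2 ∂μ = 1) :
    ∫ ω, ‖1 - S ω‖^2 ∂μ ≤ 2 * (1 - (∫ ω, S ω ∂μ).re) ∧
    2 * (1 - (∫ ω, S ω ∂μ).re)
      ≤ 2 * ∫ ω in {ω | lam < ‖F ω‖}, Real.log (‖F ω‖ / lam) ∂μ ∧
    2 * ∫ ω in {ω | lam < ‖F ω‖}, Real.log (‖F ω‖ / lam) ∂μ
      ≤ (2/lam) * ∫ ω in {ω | lam < ‖F ω‖}, ‖F ω‖ ∂μ ∧
    ∫ ω, ‖F ω - G ω‖ ∂μ ≤ 1/lam :=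
  stmt_16_general μ F G hFm hGm hFG hFne S hS hF2 hSexp lam hlam hS1 hS2 hnorm
end
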